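/- arXiv:1908.08691 — 5 statements merged into one kernel-verified Lean document; each statement's English description precedes it below -/
import Mathlib

section
/- Let n ≥ 1, let v₁, …, vₙ ≥ 0 be values with V = maxᵢ vᵢ, and let w₁, …, wₙ ≥ 0 be weights. Consider the directed graph with vertices a₀, a₁, …, aₙ and b₁, …, bₙ and, for each i ∈ {1, …, n}, three edges: (a_{i−1}, aᵢ) with length V + 2 and cost 0; (a_{i−1}, bᵢ) with length V − vᵢ + 1 and cost wᵢ; and (bᵢ, aᵢ) with length 1 and cost 0. Then the map sending a subset T ⊆ {1, …, n} to the directed path from a₀ to aₙ that passes through bᵢ exactly when i ∈ T is a bijection between subsets of {1, …, n} and directed paths from a₀ to aₙ, and the path corresponding to T has total length (V + 2)·n − Σ_{i∈T} vᵢ and total cost Σ_{i∈T} wᵢ. Consequently, for any W ≥ 0 and any k, there exists T ⊆ {1, …, n} with Σ_{i∈T} wᵢ ≤ W and Σ_{i∈T} vᵢ ≥ k if and only if there exists a directed path from a₀ to aₙ of total cost at most W and total length at most (V + 2)·n − k. -/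
open scoped BigOperators

/-- Vertices of the reduction graph: `Sum.inl i` is `aᵢ` (for `i : Fin (n+1)`)
and `Sum.inr k` is `b_{k+1}` (one `b`-vertex per item `k : Fin n`). -/
abbrev KnapVtx (n : ℕ) := Fin (n + 1) ⊕ Fin n

/-- Edge relation of the reduction graph: for each item `k`, edges
`a_k → a_{k+1}`, `a_k → b_{k+1}`, and `b_{k+1} → a_{k+1}`. -/
def knapE (n : ℕ) : KnapVtx n → KnapVtx n → Prop
  | Sum.inl i, Sum.inl j => ∃ k : Fin n, i = k.castSucc ∧ j = k.succ
  | Sum.inl i, Sum.inr k => i = k.castSucc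
  | Sum.inr k, Sum.inl j => j = k.succ
  | Sum.inr _, Sum.inr _ => False

/-- Edge lengths of the reduction graph. -/
def knapLen (n : ℕ) (V : ℝ) (v : Fin n → ℝ) : KnapVtx n → KnapVtx n → ℝ
  | Sum.inl _, Sum.inl _ => V + 2
  | Sum.inl _, Sum.inr k => V - v k + 1
  | Sum.inr _, Sum.inl _ => 1
  | Sum.inr _, Sum.inr _ => 0

/-- Edge costs of the reduction graph. -/
def knapCost (n : ℕ) (w : Fin n → ℝ) : KnapVtx n → KnapVtx n → ℝ
  | Sum.inl _, Sum.inr k => w k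
  | _, _ => 0

/-- The sum of `f` over consecutive pairs of a list. -/
def pairSum {V : Type*} (f : V → V → ℝ) : List V → ℝ
  | [] => 0
  | [_] => 0
  | a :: b :: rest => f a b + pairSum f (b :: rest)

/-- A directed path from `a₀` to `aₙ` in the reduction graph. -/
structure KnapPath (n : ℕ) where
  verts : List (KnapVtx n)
  ne : verts ≠ []
  head : verts.head? = some (Sum.inl (0 : Fin (n + 1)))
  last : verts.getLast? = some (Sum.inl (Fin.last n))
  chain : verts.Chain' (knapE n)

namespace KnapAux

variable {n : ℕ}

def seg (T : Finset (Fin n)) (k : Fin n) : List (KnapVtx n) :=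
  if k ∈ T then [Sum.inr k, Sum.inl k.succ] else [Sum.inl k.succ]

def canonTail (T : Finset (Fin n)) : ℕ → ℕ → List (KnapVtx n)
  | 0, _ => []
  | fuel+1, i => if h : i < n then seg T ⟨i, h⟩ ++ canonTail T fuel (i+1) else []

lemma pairSum_cons_cons (f : KnapVtx n → KnapVtx n → ℝ) (a b : KnapVtx n) (l : List (KnapVtx n)) :
    pairSum f (a :: b :: l) = f a b + pairSum f (b :: l) := rfl

def idx : KnapVtx n → ℕ
  | Sum.inl j => j.val
  | Sum.inr k => k.val

lemma knapE_idx {x y : KnapVtx n} (h : knapE n x y) : idx x ≤ idx y := by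
  cases x with
  | inl i =>
    cases y with
    | inl j =>
      obtain ⟨k, rfl, rfl⟩ := h
      simp [idx, Fin.val_succ]
    | inr k =>
      rw [show i = k.castSucc from h]
      simp [idx]
  | inr k =>
    cases y with
    | inl j =>
      rw [show j = k.succ from h]
      simp [idx, Fin.val_succ]
    | inr k' => exact absurd h (by simp [knapE])

lemma chain_mono : ∀ (l : List (KnapVtx n)) (a : KnapVtx n),
    (a :: l).Chain' (knapE n) → ∀ x ∈ l, idx a ≤ idx x := by
  intro l
  induction l with
  | nil => intro a _ x hx; simp at hx
  | cons b l' ih =>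
    intro a hc x hx
    rw [List.Chain', List.isChain_cons_cons] at hc
    rcases List.mem_cons.mp hx with rfl | hx'
    · exact knapE_idx hc.1
    · exact le_trans (knapE_idx hc.1) (ih b hc.2 x hx')

lemma canonTail_mem (T : Finset (Fin n)) :
    ∀ (fuel i : ℕ), i + fuel = n →
      ∀ k : Fin n, (Sum.inr k ∈ canonTail T fuel i ↔ k ∈ T ∧ i ≤ k.val) := by
  intro fuel
  induction fuel with
  | zero =>
    intro i h k
    simp [canonTail]
    intro _
    have := k.isLt
    omega
  | succ fuel ih =>
    intro i h k
    have hin : i < n := by omega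
    rw [canonTail, dif_pos hin, List.mem_append, ih (i+1) (by omega) k]
    unfold seg
    by_cases hT : (⟨i, hin⟩ : Fin n) ∈ T
    · rw [if_pos hT]
      simp only [List.mem_cons, List.mem_singleton]
      constructor
      · rintro (⟨h1 | h1⟩ | ⟨h1, h2⟩)
        · rcases Sum.inr.injEq .. ▸ h1 with rfl
          exact ⟨hT, le_refl _⟩
        · exact absurd h1 (by simp)
        · exact ⟨h1, by omega⟩
      · rintro ⟨hkT, hik⟩
        by_cases hk : k.val = i
        · left; left
          have : k = ⟨i, hin⟩ := by apply Fin.ext; exact hk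
          rw [this]
        · right; exact ⟨hkT, by omega⟩
    · rw [if_neg hT]
      simp only [List.mem_singleton]
      constructor
      · rintro (h1 | ⟨h1, h2⟩)
        · exact absurd h1 (by simp)
        · exact ⟨h1, by omega⟩
      · rintro ⟨hkT, hik⟩
        by_cases hk : k.val = i
        · exfalso
          have hk' : k = ⟨i, hin⟩ := by apply Fin.ext; exact hk
          exact hT (hk' ▸ hkT)
        · right; exact ⟨hkT, by omega⟩

lemma canonTail_last (T : Finset (Fin n)) :
    ∀ (fuel i : ℕ) (h : i + fuel = n),
      (Sum.inl (⟨i, by omega⟩ : Fin (n+1)) :: canonTail T fuel i).getLast?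
        = some (Sum.inl (Fin.last n)) := by
  intro fuel
  induction fuel with
  | zero =>
    intro i h
    simp [canonTail, Fin.last, Fin.ext_iff]
    omega
  | succ fuel ih =>
    intro i h
    have hin : i < n := by omega
    rw [canonTail, dif_pos hin]
    unfold seg
    have hsucc : (Fin.succ ⟨i, hin⟩ : Fin (n+1)) = ⟨i+1, by omega⟩ := rfl
    by_cases hT : (⟨i, hin⟩ : Fin n) ∈ T
    · rw [if_pos hT]
      show (Sum.inl _ :: Sum.inr _ :: Sum.inl _ :: canonTail T fuel (i+1)).getLast? = _
      rw [List.getLast?_cons_cons, List.getLast?_cons_cons, hsucc]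
      exact ih (i+1) (by omega)
    · rw [if_neg hT]
      show (Sum.inl _ :: Sum.inl _ :: canonTail T fuel (i+1)).getLast? = _
      rw [List.getLast?_cons_cons, hsucc]
      exact ih (i+1) (by omega)

lemma canonTail_chain (T : Finset (Fin n)) :
    ∀ (fuel i : ℕ) (h : i + fuel = n),
      (Sum.inl (⟨i, by omega⟩ : Fin (n+1)) :: canonTail T fuel i).Chain' (knapE n) := by
  intro fuel
  induction fuel with
  | zero => intro i h; simp [canonTail, List.Chain', List.isChain_singleton]
  | succ fuel ih =>
    intro i h
    have hin : i < n := by omega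
    rw [canonTail, dif_pos hin]
    unfold seg
    have hsucc : (Fin.succ ⟨i, hin⟩ : Fin (n+1)) = ⟨i+1, by omega⟩ := rfl
    have hcast : (⟨i, by omega⟩ : Fin (n+1)) = Fin.castSucc ⟨i, hin⟩ := rfl
    by_cases hT : (⟨i, hin⟩ : Fin n) ∈ T
    · rw [if_pos hT]
      show (Sum.inl _ :: Sum.inr _ :: Sum.inl _ :: canonTail T fuel (i+1)).Chain' (knapE n)
      rw [List.Chain', List.isChain_cons_cons, List.isChain_cons_cons]
      refine ⟨hcast, rfl, ?_⟩
      rw [hsucc]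
      exact ih (i+1) (by omega)
    · rw [if_neg hT]
      show (Sum.inl _ :: Sum.inl _ :: canonTail T fuel (i+1)).Chain' (knapE n)
      rw [List.Chain', List.isChain_cons_cons]
      refine ⟨⟨⟨i, hin⟩, hcast, rfl⟩, ?_⟩
      rw [hsucc]
      exact ih (i+1) (by omega)

lemma filter_sum_step (T : Finset (Fin n)) (g : Fin n → ℝ) (i : ℕ) (hin : i < n) :
    ∑ k ∈ T.filter (fun k => i ≤ k.val), g k
      = (if (⟨i, hin⟩ : Fin n) ∈ T then g ⟨i, hin⟩ else 0)
        + ∑ k ∈ T.filter (fun k => i+1 ≤ k.val), g k := by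
  rw [Finset.sum_filter, Finset.sum_filter, ← Finset.sum_ite_eq' T (⟨i, hin⟩ : Fin n) g,
    ← Finset.sum_add_distrib]
  apply Finset.sum_congr rfl
  intro k hk
  split_ifs <;> simp_all [Fin.ext_iff] <;> omega

lemma canonTail_pairSum (T : Finset (Fin n)) (f : KnapVtx n → KnapVtx n → ℝ)
    (c : ℝ) (g : Fin n → ℝ)
    (h1 : ∀ i j : Fin (n+1), f (Sum.inl i) (Sum.inl j) = c)
    (h2 : ∀ (i j : Fin (n+1)) (k : Fin n),
      f (Sum.inl i) (Sum.inr k) + f (Sum.inr k) (Sum.inl j) = c - g k) :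
    ∀ (fuel i : ℕ) (h : i + fuel = n),
      pairSum f (Sum.inl (⟨i, by omega⟩ : Fin (n+1)) :: canonTail T fuel i)
        = c * fuel - ∑ k ∈ T.filter (fun k => i ≤ k.val), g k := by
  intro fuel
  induction fuel with
  | zero =>
    intro i h
    have hempty : T.filter (fun k => i ≤ k.val) = ∅ := by
      apply Finset.filter_false_of_mem
      intro k _
      have := k.isLt
      omega
    simp [canonTail, pairSum, hempty]
  | succ fuel ih =>
    intro i h
    have hin : i < n := by omega
    rw [canonTail, dif_pos hin, filter_sum_step T g i hin]
    unfold seg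
    have hsucc : (Fin.succ ⟨i, hin⟩ : Fin (n+1)) = ⟨i+1, by omega⟩ := rfl
    by_cases hT : (⟨i, hin⟩ : Fin n) ∈ T
    · rw [if_pos hT, if_pos hT]
      show pairSum f (Sum.inl _ :: Sum.inr _ :: Sum.inl _ :: canonTail T fuel (i+1)) = _
      rw [pairSum_cons_cons, pairSum_cons_cons, hsucc, ih (i+1) (by omega)]
      rw [← add_assoc, h2]
      push_cast
      ring
    · rw [if_neg hT, if_neg hT]
      show pairSum f (Sum.inl _ :: Sum.inl _ :: canonTail T fuel (i+1)) = _
      rw [pairSum_cons_cons, hsucc, ih (i+1) (by omega), h1]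
      push_cast
      ring


lemma canon_unique (T : Finset (Fin n)) :
    ∀ (fuel i : ℕ), i + fuel = n → ∀ (a : Fin (n+1)), a.val = i →
      ∀ (l : List (KnapVtx n)),
      l.head? = some (Sum.inl a) →
      l.getLast? = some (Sum.inl (Fin.last n)) →
      l.Chain' (knapE n) →
      (∀ k : Fin n, Sum.inr k ∈ l ↔ k ∈ T ∧ i ≤ k.val) →
      l = Sum.inl a :: canonTail T fuel i := by
  intro fuel
  induction fuel with
  | zero =>
    intro i h a ha l hh hl hc hm
    cases l with
    | nil => simp at hh
    | cons x l' =>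
      rw [List.head?_cons, Option.some_inj] at hh
      subst hh
      cases l' with
      | nil => simp [canonTail]
      | cons b l'' =>
        exfalso
        rw [List.Chain', List.isChain_cons_cons] at hc
        have he := hc.1
        cases b with
        | inl j =>
          obtain ⟨k, hk, -⟩ := he
          have hkv : a.val = k.castSucc.val := by rw [hk]
          have := k.isLt
          simp [Fin.coe_castSucc] at hkv
          omega
        | inr k =>
          have hkv : a.val = k.castSucc.val := by
            rw [show a = k.castSucc from he]
          have := k.isLt
          simp [Fin.coe_castSucc] at hkv
          omega
  | succ fuel ih =>
    intro i h a ha l hh hl hc hm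
    have hin : i < n := by omega
    cases l with
    | nil => simp at hh
    | cons x rest =>
      rw [List.head?_cons, Option.some_inj] at hh
      subst hh
      cases rest with
      | nil =>
        exfalso
        simp only [List.getLast?_singleton, Option.some_inj, Sum.inl.injEq] at hl
        have : a.val = (Fin.last n).val := by rw [hl]
        simp [Fin.val_last] at this
        omega
      | cons b rest' =>
        rw [List.Chain', List.isChain_cons_cons] at hc
        have he := hc.1
        have hcm := hc.2
        rw [canonTail, dif_pos hin]
        unfold seg
        cases b with
        | inl j =>
          -- skip edge: j = a_{i+1}
          obtain ⟨k, hk1, hk2⟩ := he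
          have hkv : k.val = i := by
            have : a.val = k.castSucc.val := by rw [hk1]
            simp [Fin.coe_castSucc] at this
            omega
          have hjv : j.val = i + 1 := by
            rw [hk2]
            simp [Fin.val_succ, hkv]
          -- b-vertex i is not in the tail
          have hnoti : Sum.inr (⟨i, hin⟩ : Fin n) ∉ (Sum.inl j :: rest') := by
            intro hmem
            have hmono := chain_mono rest' _ hcm
            rcases List.mem_cons.mp hmem with h' | h'
            · exact absurd h' (by simp)
            · have := hmono _ h'
              simp [idx, hjv] at this
          have hT : (⟨i, hin⟩ : Fin n) ∉ T := by
            intro hT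
            have := (hm ⟨i, hin⟩).mpr ⟨hT, le_refl _⟩
            rcases List.mem_cons.mp this with h' | h'
            · exact absurd h' (by simp)
            · exact hnoti h'
          rw [if_neg hT]
          have hrest := ih (i+1) (by omega) j hjv (Sum.inl j :: rest')
            (by rw [List.head?_cons])
            (by rw [← hl, List.getLast?_cons_cons])
            hcm
            (by
              intro k'
              constructor
              · intro hmem
                have hmono := chain_mono rest' _ hcm
                have hk'1 : k' ∈ T :=
                  ((hm k').mp (List.mem_cons_of_mem _ hmem)).1
                have hk'2 : i + 1 ≤ k'.val := by
                  rcases List.mem_cons.mp hmem with h' | h'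
                  · exact absurd h' (by simp)
                  · have := hmono _ h'
                    simp [idx, hjv] at this
                    omega
                exact ⟨hk'1, hk'2⟩
              · rintro ⟨h1, h2⟩
                have := (hm k').mpr ⟨h1, by omega⟩
                rcases List.mem_cons.mp this with h' | h'
                · exact absurd h' (by simp)
                · exact h')
          have hsucc : (Fin.succ ⟨i, hin⟩ : Fin (n+1)) = j := by
            apply Fin.ext
            simp [Fin.val_succ, hjv]
          rw [List.cons_append, List.nil_append, hsucc, hrest]
        | inr k =>
          -- through b-vertex: k = b_i
          have hkv : k.val = i := by
            have : a.val = k.castSucc.val := by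
              rw [show a = k.castSucc from he]
            simp [Fin.coe_castSucc] at this
            omega
          cases rest' with
          | nil =>
            exfalso
            rw [List.getLast?_cons_cons] at hl
            simp at hl
          | cons c rest'' =>
            rw [List.isChain_cons_cons] at hcm
            have he2 := hcm.1
            have hcm2 := hcm.2
            cases c with
            | inr k2 => exact absurd he2 (by simp [knapE])
            | inl j2 =>
              have hj2v : j2.val = i + 1 := by
                rw [show j2 = Fin.succ k from he2]
                simp [Fin.val_succ, hkv]
              have hT : (⟨i, hin⟩ : Fin n) ∈ T := by
                have hk0 : k = (⟨i, hin⟩ : Fin n) := Fin.ext hkv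
                have := (hm k).mp (by simp)
                rw [← hk0]
                exact this.1
              rw [if_pos hT]
              have hrest := ih (i+1) (by omega) j2 hj2v (Sum.inl j2 :: rest'')
                (by rw [List.head?_cons])
                (by rw [← hl, List.getLast?_cons_cons, List.getLast?_cons_cons])
                hcm2
                (by
                  intro k'
                  constructor
                  · intro hmem
                    have hmono := chain_mono rest'' _ hcm2
                    have hk'1 : k' ∈ T :=
                      ((hm k').mp
                        (List.mem_cons_of_mem _ (List.mem_cons_of_mem _ hmem))).1
                    have hk'2 : i + 1 ≤ k'.val := by
                      rcases List.mem_cons.mp hmem with h' | h'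
                      · exact absurd h' (by simp)
                      · have := hmono _ h'
                        simp [idx, hj2v] at this
                        omega
                    exact ⟨hk'1, hk'2⟩
                  · rintro ⟨h1, h2⟩
                    have := (hm k').mpr ⟨h1, by omega⟩
                    rcases List.mem_cons.mp this with h' | h'
                    · exact absurd h' (by simp)
                    · rcases List.mem_cons.mp h' with h'' | h''
                      · exfalso
                        have hkk : k' = k := Sum.inr.inj h''
                        rw [hkk] at h2
                        omega
                      · exact h'')
              have hk0 : (⟨i, hin⟩ : Fin n) = k := by
                apply Fin.ext; simp [hkv]
              have hsucc : (Fin.succ ⟨i, hin⟩ : Fin (n+1)) = j2 := by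
                apply Fin.ext
                simp [Fin.val_succ, hj2v]
              rw [List.cons_append, List.cons_append, List.nil_append, hsucc, hk0, hrest]

end KnapAux

lemma KnapPath.ext' {n : ℕ} {p q : KnapPath n} (h : p.verts = q.verts) : p = q := by
  cases p; cases q; simp_all

namespace KnapAux

variable {n : ℕ}

lemma zero_eq_mk (n : ℕ) : (0 : Fin (n+1)) = ⟨0, Nat.succ_pos n⟩ := by
  apply Fin.ext; simp

def canonPath (T : Finset (Fin n)) : KnapPath n where
  verts := Sum.inl (0 : Fin (n+1)) :: canonTail T n 0
  ne := by simp
  head := rfl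
  last := by
    rw [zero_eq_mk]
    exact canonTail_last T n 0 (by omega)
  chain := by
    rw [zero_eq_mk]
    exact canonTail_chain T n 0 (by omega)

lemma canonPath_mem (T : Finset (Fin n)) (k : Fin n) :
    Sum.inr k ∈ (canonPath T).verts ↔ k ∈ T := by
  show Sum.inr k ∈ Sum.inl (0 : Fin (n+1)) :: canonTail T n 0 ↔ _
  rw [List.mem_cons, canonTail_mem T n 0 (by omega) k]
  simp

lemma verts_eq (T : Finset (Fin n)) (p : KnapPath n)
    (hp : ∀ i : Fin n, Sum.inr i ∈ p.verts ↔ i ∈ T) :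
    p.verts = (canonPath T).verts := by
  have h0 : ((0 : Fin (n+1))).val = 0 := by simp
  exact canon_unique T n 0 (by omega) 0 h0 p.verts p.head p.last p.chain
    (by intro k; rw [hp k]; simp)

lemma filter_zero (T : Finset (Fin n)) :
    T.filter (fun k => 0 ≤ k.val) = T :=
  Finset.filter_true_of_mem (fun _ _ => Nat.zero_le _)

lemma path_len (V : ℝ) (v : Fin n → ℝ) (T : Finset (Fin n)) :
    pairSum (knapLen n V v) (canonPath T).verts = (V + 2) * n - ∑ i ∈ T, v i := by
  show pairSum (knapLen n V v) (Sum.inl (0 : Fin (n+1)) :: canonTail T n 0) = _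
  rw [zero_eq_mk]
  rw [canonTail_pairSum T (knapLen n V v) (V + 2) v
    (fun _ _ => rfl)
    (by intro i j k; show (V - v k + 1) + 1 = (V + 2) - v k; ring)
    n 0 (by omega)]
  rw [filter_zero]

lemma path_cost (w : Fin n → ℝ) (T : Finset (Fin n)) :
    pairSum (knapCost n w) (canonPath T).verts = ∑ i ∈ T, w i := by
  show pairSum (knapCost n w) (Sum.inl (0 : Fin (n+1)) :: canonTail T n 0) = _
  rw [zero_eq_mk]
  rw [canonTail_pairSum T (knapCost n w) 0 (fun k => -(w k))
    (fun _ _ => rfl)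
    (by intro i j k; show w k + 0 = 0 - (-(w k)); ring)
    n 0 (by omega)]
  rw [filter_zero]
  simp [Finset.sum_neg_distrib]

end KnapAux

/-- Correctness of the Knapsack-to-DROP reduction: subsets `T ⊆ {1,…,n}`
biject with directed paths from `a₀` to `aₙ` (the path through `bᵢ` exactly
when `i ∈ T`); the path for `T` has total length `(V+2)·n − Σ_{i∈T} vᵢ` and
total cost `Σ_{i∈T} wᵢ`; hence Knapsack feasibility corresponds to the
existence of a short cheap path. -/
theorem stmt_3 (n : ℕ) (hn : 1 ≤ n) (v w : Fin n → ℝ)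
    (hv : ∀ i, 0 ≤ v i) (hw : ∀ i, 0 ≤ w i)
    (V : ℝ) (hV : IsGreatest (Set.range v) V) :
    (∀ T : Finset (Fin n), ∃! p : KnapPath n,
      ∀ i : Fin n, (Sum.inr i ∈ p.verts ↔ i ∈ T)) ∧
    (∀ (T : Finset (Fin n)) (p : KnapPath n),
      (∀ i : Fin n, (Sum.inr i ∈ p.verts ↔ i ∈ T)) →
      pairSum (knapLen n V v) p.verts = (V + 2) * n - ∑ i ∈ T, v i ∧
      pairSum (knapCost n w) p.verts = ∑ i ∈ T, w i) ∧
    (∀ W k : ℝ, 0 ≤ W →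
      ((∃ T : Finset (Fin n), (∑ i ∈ T, w i) ≤ W ∧ k ≤ ∑ i ∈ T, v i) ↔
        (∃ p : KnapPath n, pairSum (knapCost n w) p.verts ≤ W ∧
          pairSum (knapLen n V v) p.verts ≤ (V + 2) * n - k))) := by
  open KnapAux in
  have part2 : ∀ (T : Finset (Fin n)) (p : KnapPath n),
      (∀ i : Fin n, (Sum.inr i ∈ p.verts ↔ i ∈ T)) →
      pairSum (knapLen n V v) p.verts = (V + 2) * n - ∑ i ∈ T, v i ∧
      pairSum (knapCost n w) p.verts = ∑ i ∈ T, w i := by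
    intro T p hp
    rw [verts_eq T p hp]
    exact ⟨path_len V v T, path_cost w T⟩
  refine ⟨?_, part2, ?_⟩
  · intro T
    exact ⟨canonPath T, canonPath_mem T,
      fun q hq => KnapPath.ext' (verts_eq T q hq)⟩
  · intro W k hW
    constructor
    · rintro ⟨T, h1, h2⟩
      obtain ⟨hlen, hcost⟩ := part2 T (canonPath T) (canonPath_mem T)
      refine ⟨canonPath T, ?_, ?_⟩
      · rw [hcost]; exact h1
      · rw [hlen]; linarith
    · rintro ⟨p, h1, h2⟩
      letI : DecidablePred (fun k : Fin n => Sum.inr k ∈ p.verts) :=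
        fun k => Classical.dec _
      set T := Finset.univ.filter (fun k => Sum.inr k ∈ p.verts) with hT
      have hp : ∀ i : Fin n, Sum.inr i ∈ p.verts ↔ i ∈ T := by
        intro i; simp [hT]
      obtain ⟨hlen, hcost⟩ := part2 T p hp
      refine ⟨T, ?_, ?_⟩
      · rw [← hcost]; exact h1
      · rw [hlen] at h2; linarith
end

section
/- Let S be a finite nonempty type of loco-states equipped with a neighbor relation, a positive length l(st', st) and a nonnegative cost MIL(st', st) for each pair of neighboring loco-states, and fix a start loco-state s ∈ S. For st ∈ S and a real number λ, let c(st, λ) ∈ ℝ≥0∞ be the infimum, over all walks from s to st of total length exactly λ, of the total cost of the walk (with c(st, λ) = ∞ if no such walk exists; the empty walk from s to s has length 0 and cost 0). Then for every st ∈ S and every real λ with ¬(st = s ∧ λ = 0), c(st, λ) = inf over loco-states st' neighboring st of (c(st', λ − l(st', st)) + MIL(st', st)). -/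
open scoped ENNReal

/-- `p` is a walk from `x` to `y` along the neighbor relation `N`
(the single-vertex list `[x]` is the empty walk from `x` to `x`). -/
def IsWalk {V : Type*} (N : V → V → Prop) (x y : V) (p : List V) : Prop :=
  p ≠ [] ∧ p.head? = some x ∧ p.getLast? = some y ∧ p.Chain' N

/-- `dpCost N l MIL s st lam` is the infimum, over all walks from `s` to `st`
of total length exactly `lam`, of the total cost of the walk (`∞` if no such
walk exists). -/
noncomputable def dpCost {S : Type*} (N : S → S → Prop) (l MIL : S → S → ℝ)
    (s st : S) (lam : ℝ) : ℝ≥0∞ :=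
  sInf {x : ℝ≥0∞ | ∃ p : List S, IsWalk N s st p ∧ pairSum l p = lam ∧
    x = ENNReal.ofReal (pairSum MIL p)}

lemma pairSum_concat {V : Type*} (f : V → V → ℝ) :
    ∀ (p : List V) (hp : p ≠ []) (y : V),
      pairSum f (p ++ [y]) = pairSum f p + f (p.getLast hp) y
  | [], hp, y => absurd rfl hp
  | [a], _, y => by simp [pairSum]
  | a :: b :: rest, _, y => by
      have ih := pairSum_concat f (b :: rest) (by simp) y
      simp only [List.cons_append] at ih ⊢
      rw [pairSum, ih, pairSum, ← add_assoc]
      congr 1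

lemma pairSum_nonneg {V : Type*} (N : V → V → Prop) (f : V → V → ℝ)
    (hf : ∀ a b, N a b → 0 ≤ f a b) :
    ∀ p : List V, p.Chain' N → 0 ≤ pairSum f p
  | [], _ => le_refl 0
  | [a], _ => le_refl 0
  | a :: b :: rest, h => by
      replace h := List.isChain_cons_cons.mp h
      have ih := pairSum_nonneg N f hf (b :: rest) h.2
      exact add_nonneg (hf _ _ h.1) ih

/-- The Bellman recurrence underlying the Basic Dynamic Programming algorithm
for DROP. -/
theorem stmt_4 {S : Type*} [Fintype S] [Nonempty S]
    (N : S → S → Prop) (hsymm : ∀ a b : S, N a b → N b a)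
    (l MIL : S → S → ℝ)
    (hl : ∀ a b : S, N a b → 0 < l a b) (hMIL : ∀ a b : S, N a b → 0 ≤ MIL a b)
    (s : S) :
    ∀ (st : S) (lam : ℝ), ¬(st = s ∧ lam = 0) →
      dpCost N l MIL s st lam =
        ⨅ st' : {x : S // N x st},
          (dpCost N l MIL s st' (lam - l st' st) + ENNReal.ofReal (MIL st' st)) := by
  intro st lam hne
  apply le_antisymm
  · -- LHS ≤ each term of the infimum
    apply le_iInf
    rintro ⟨st', hN⟩
    rw [show dpCost N l MIL s st' (lam - l st' st) = sInf _ from rfl, ENNReal.sInf_add]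
    refine le_iInf₂ ?_
    rintro x ⟨p, ⟨hp0, hph, hpl, hpc⟩, hlen, rfl⟩
    have hlast : p.getLast hp0 = st' := by
      rw [List.getLast?_eq_getLast (l := p) hp0] at hpl
      exact Option.some_inj.mp hpl
    apply sInf_le
    refine ⟨p ++ [st], ⟨by simp, ?_, List.getLast?_concat (l := p), ?_⟩, ?_, ?_⟩
    · obtain ⟨a, t, rfl⟩ := List.exists_cons_of_ne_nil hp0
      simpa using hph
    · refine List.isChain_append.mpr ⟨hpc, List.isChain_singleton st, ?_⟩
      intro x hx y hy
      rw [hpl, Option.mem_some_iff] at hx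
      simp only [List.head?_cons, Option.mem_some_iff] at hy
      subst hx; subst hy
      exact hN
    · rw [pairSum_concat l p hp0 st, hlast, hlen]; ring
    · rw [pairSum_concat MIL p hp0 st, hlast,
        ENNReal.ofReal_add (pairSum_nonneg N MIL hMIL p hpc) (hMIL _ _ hN)]
  · -- infimum ≤ each element of the sInf set
    apply le_sInf
    rintro x ⟨p, ⟨hp0, hph, hpl, hpc⟩, hlen, rfl⟩
    by_cases hq0 : p.dropLast = []
    · -- p is a singleton: contradicts hne
      exfalso
      obtain ⟨a, t, rfl⟩ := List.exists_cons_of_ne_nil hp0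
      have ht : t = [] := by
        cases t with
        | nil => rfl
        | cons b u => simp [List.dropLast] at hq0
      subst ht
      simp only [List.head?_cons, Option.some_inj] at hph
      simp only [List.getLast?_singleton, Option.some_inj] at hpl
      refine hne ⟨?_, ?_⟩
      · rw [← hpl]; exact hph
      · simpa [pairSum] using hlen.symm
    · set q := p.dropLast with hqdef
      have hlastp : p.getLast hp0 = st := by
        rw [List.getLast?_eq_getLast (l := p) hp0] at hpl
        exact Option.some_inj.mp hpl
      have hdec : q ++ [st] = p := by rw [hqdef, ← hlastp]; exact List.dropLast_append_getLast hp0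
      have hchain : q.Chain' N ∧ N (q.getLast hq0) st := by
        rw [← hdec] at hpc
        rcases List.isChain_append.mp hpc with ⟨h1, _, h3⟩
        exact ⟨h1, h3 _ (by rw [List.getLast?_eq_getLast (l := q) hq0]; rfl) st (by simp)⟩
      set st' := q.getLast hq0 with hst'
      have hN : N st' st := hchain.2
      have hheadq : q.head? = some s := by
        rw [← hdec] at hph
        obtain ⟨a, t, hqe⟩ := List.exists_cons_of_ne_nil hq0
        rw [hqe] at hph ⊢
        simpa using hph
      have hlenq : pairSum l q = lam - l st' st := by
        rw [← hdec, pairSum_concat l q hq0 st] at hlen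
        rw [← hst'] at hlen
        linarith
      calc (⨅ s' : {x : S // N x st},
            (dpCost N l MIL s s' (lam - l s' st) + ENNReal.ofReal (MIL s' st)))
          ≤ dpCost N l MIL s st' (lam - l st' st) + ENNReal.ofReal (MIL st' st) :=
            iInf_le _ (⟨st', hN⟩ : {x : S // N x st})
        _ ≤ ENNReal.ofReal (pairSum MIL q) + ENNReal.ofReal (MIL st' st) := by
            gcongr
            exact sInf_le ⟨q, ⟨hq0, hheadq, List.getLast?_eq_getLast (l := q) hq0, hchain.1⟩, hlenq, rfl⟩
        _ = ENNReal.ofReal (pairSum MIL p) := by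
            rw [← ENNReal.ofReal_add (pairSum_nonneg N MIL hMIL q hchain.1) (hMIL _ _ hN),
              ← hdec, pairSum_concat MIL q hq0 st]
end

section
/- Let ε > 0, let m ≥ 1 be an integer, and let L̲ > 0. Set S = ε·L̲/m. Let P be a set of candidate paths, where each path p ∈ P is given by a list of at most m nonnegative edge lengths; let l(p) denote its total true length and l_X(p) its total rounded length, obtained by replacing each edge length λ by S·⌈λ/S⌉. Suppose p* ∈ P satisfies L̲ ≤ l(p*), and p ∈ P satisfies l_X(p) ≤ l_X(p*). Then l(p) ≤ l_X(p) ≤ (1 + ε)·l(p*). -/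
/-- The rounded length of a path given as a list of edge lengths: each edge
length `x` is replaced by `S·⌈x/S⌉`. -/
noncomputable def roundedLen (S : ℝ) (p : List ℝ) : ℝ :=
  (p.map (fun x => S * ((⌈x / S⌉ : ℤ) : ℝ))).sum

lemma aux_lower (S : ℝ) (hS : 0 < S) (l : List ℝ) :
    l.sum ≤ (l.map (fun x => S * ((⌈x / S⌉ : ℤ) : ℝ))).sum := by
  induction l with
  | nil => simp
  | cons a t ih =>
    simp only [List.map_cons, List.sum_cons]
    have h : a ≤ S * ((⌈a / S⌉ : ℤ) : ℝ) := by
      have := Int.le_ceil (a / S)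
      calc a = S * (a / S) := by field_simp
        _ ≤ S * ((⌈a / S⌉ : ℤ) : ℝ) := mul_le_mul_of_nonneg_left this hS.le
    linarith

lemma aux_upper (S : ℝ) (hS : 0 < S) (l : List ℝ) :
    (l.map (fun x => S * ((⌈x / S⌉ : ℤ) : ℝ))).sum ≤ l.sum + l.length * S := by
  induction l with
  | nil => simp
  | cons a t ih =>
    simp only [List.map_cons, List.sum_cons, List.length_cons]
    have h : S * ((⌈a / S⌉ : ℤ) : ℝ) ≤ a + S := by
      have := (Int.ceil_lt_add_one (a / S)).le
      have h2 : S * ((⌈a / S⌉ : ℤ) : ℝ) ≤ S * (a / S + 1) :=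
        mul_le_mul_of_nonneg_left this hS.le
      have h3 : S * (a / S + 1) = a + S := by field_simp
      linarith
    push_cast
    linarith

/-- Core inequality of the `(1+ε)`-approximation guarantee of DEWN: with
scaling parameter `S = ε·L̲/m`, if `p*` is a candidate path of true length at
least `L̲` and `p` is rounded-length-optimal relative to `p*`, then
`l(p) ≤ l_X(p) ≤ (1+ε)·l(p*)`. -/
theorem stmt_9 (ε : ℝ) (hε : 0 < ε) (m : ℕ) (hm : 1 ≤ m) (L : ℝ) (hL : 0 < L)
    (P : Set (List ℝ))
    (hP : ∀ p ∈ P, p.length ≤ m ∧ ∀ x ∈ p, (0 : ℝ) ≤ x)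
    (pstar p : List ℝ) (hpstar : pstar ∈ P) (hp : p ∈ P)
    (hLb : L ≤ pstar.sum)
    (hopt : roundedLen (ε * L / m) p ≤ roundedLen (ε * L / m) pstar) :
    p.sum ≤ roundedLen (ε * L / m) p ∧
    roundedLen (ε * L / m) p ≤ (1 + ε) * pstar.sum := by
  have hm' : (0 : ℝ) < m := by positivity
  have hS : 0 < ε * L / m := by positivity
  refine ⟨aux_lower _ hS p, ?_⟩
  have h1 := aux_upper (ε * L / m) hS pstar
  have hlen : (pstar.length : ℝ) ≤ m := by exact_mod_cast (hP pstar hpstar).1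
  have h2 : (pstar.length : ℝ) * (ε * L / m) ≤ (m : ℝ) * (ε * L / m) :=
    mul_le_mul_of_nonneg_right hlen hS.le
  have h3 : (m : ℝ) * (ε * L / m) = ε * L := by field_simp
  have h4 : ε * L ≤ ε * pstar.sum := mul_le_mul_of_nonneg_left hLb hε.le
  unfold roundedLen at *
  nlinarith
end

section
/- Let L and Θ be finite nonempty types (locations and orientations), let C_θ ≥ 0, and let MIL : (L × Θ) → (L × Θ) → ℝ be a nonnegative cost function such that for every location x ∈ L and all orientations θ, θ' ∈ Θ, the in-place reorientation cost satisfies MIL((x, θ), (x, θ')) ≤ C_θ. Define the orientation-collapsed cost c̄(x, y) = min over θ, θ' ∈ Θ of MIL((x, θ), (y, θ')). Then for every sequence of locations x₀, x₁, …, xₙ and every initial orientation θ₀, there exists a finite walk in L × Θ starting at (x₀, θ₀) whose sequence of visited locations, after deleting consecutive repetitions, is x₀, x₁, …, xₙ, and whose total cost (the sum of MIL over consecutive states of the walk) is at most Σ_{i=1}^{n} c̄(x_{i−1}, xᵢ) + n·C_θ. -/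
open scoped BigOperators

/-- Error bound of Critical Orientation Simplification (COS) in DEWN: any
sequence of (pairwise consecutively distinct) locations `x₀, …, xₙ` can be
realized, from any initial orientation, by a walk in the full
location–orientation state space whose visited-location sequence destutters to
`x₀, …, xₙ` and whose total MIL cost is at most the sum of the
orientation-collapsed costs plus `n·C_θ`. -/
theorem stmt_10 {L Θ : Type*} [Fintype L] [Nonempty L] [DecidableEq L]
    [Fintype Θ] [Nonempty Θ]
    (Cθ : ℝ) (hCθ : 0 ≤ Cθ)
    (MIL : L × Θ → L × Θ → ℝ) (hMIL : ∀ a b : L × Θ, 0 ≤ MIL a b)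
    (hreorient : ∀ (x : L) (θ θ' : Θ), MIL (x, θ) (x, θ') ≤ Cθ)
    (cbar : L → L → ℝ)
    (hcbar : ∀ x y : L,
      IsLeast {z : ℝ | ∃ θ θ' : Θ, MIL (x, θ) (y, θ') = z} (cbar x y)) :
    ∀ (n : ℕ) (x : Fin (n + 1) → L), (∀ i : Fin n, x i.castSucc ≠ x i.succ) →
      ∀ θ₀ : Θ,
      ∃ q : List (L × Θ), q ≠ [] ∧ q.head? = some (x 0, θ₀) ∧
        (q.map Prod.fst).destutter (· ≠ ·) = List.ofFn x ∧
        pairSum MIL q ≤ (∑ i : Fin n, cbar (x i.castSucc) (x i.succ)) + n * Cθ := by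
  intro n
  induction n with
  | zero =>
    intro x hx θ₀
    refine ⟨[(x 0, θ₀)], by simp, by simp, ?_, by simp [pairSum]⟩
    simp [List.destutter, List.ofFn_succ]
  | succ n ih =>
    intro x hx θ₀
    obtain ⟨θ, θ', hθ⟩ := (hcbar (x 0) (x 1)).1
    set y : Fin (n + 1) → L := x ∘ Fin.succ with hy
    have hxy : ∀ i : Fin n, y i.castSucc ≠ y i.succ := by
      intro i
      have := hx i.succ
      show x (Fin.succ (Fin.castSucc i)) ≠ x (Fin.succ (Fin.succ i))
      simpa only [Fin.succ_castSucc] using this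
    obtain ⟨q', hne, hhead, hdest, hcost⟩ := ih y hxy θ'
    obtain ⟨h, rest, rfl⟩ := List.exists_cons_of_ne_nil hne
    have hh : h = (x 1, θ') := by
      have : y 0 = x 1 := rfl
      simpa [this] using hhead
    subst hh
    have h01 : x 0 ≠ x 1 := by simpa using hx 0
    refine ⟨(x 0, θ₀) :: (x 0, θ) :: (x 1, θ') :: rest, by simp, by simp, ?_, ?_⟩
    · have hofn : List.ofFn x = x 0 :: List.ofFn y := by
        rw [List.ofFn_succ]; rfl
      rw [hofn]
      simp only [List.map_cons]
      rw [List.destutter_cons']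
      rw [List.destutter'_cons, if_neg (by simp), List.destutter'_cons, if_pos h01]
      rw [← List.destutter_cons']
      simpa using hdest
    · have hcost2 : pairSum MIL ((x 0, θ₀) :: (x 0, θ) :: (x 1, θ') :: rest)
          = MIL (x 0, θ₀) (x 0, θ) + MIL (x 0, θ) (x 1, θ')
            + pairSum MIL ((x 1, θ') :: rest) := by
        simp [pairSum]; ring
      rw [hcost2]
      have hsum : (∑ i : Fin (n + 1), cbar (x i.castSucc) (x i.succ))
          = cbar (x 0) (x 1) + ∑ i : Fin n, cbar (y i.castSucc) (y i.succ) := by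
        rw [Fin.sum_univ_succ]
        rfl
      rw [hsum]
      have h1 := hreorient (x 0) θ₀ θ
      push_cast
      linarith [hcost]
end

section
/- Let S be a finite nonempty type of loco-states, Γ a type of virtual locations carrying a virtual graph with positive edge lengths, and f : S → Γ a projection such that loco-states st, st' are neighbors only if (f(st), f(st')) is an edge of the virtual graph and the length l(st, st') equals the length of that virtual edge; let MIL be a nonnegative cost on neighboring loco-state pairs, with all relevant fibers of f nonempty. Define the per-edge MIL lower bound α(γ, γ') = min over st₁ ∈ f⁻¹(γ) and st₂ ∈ f⁻¹(γ') of MIL(st₁, st₂). For a loco-state st and a destination virtual location γ_t, define MRL(st, γ_t) as the infimum of total length over virtual walks from f(st) to γ_t, and MRC(st, γ_t) as the infimum over virtual walks from f(st) to γ_t of the sum of α over their consecutive pairs. Then for every r ≥ 0 and every walk p in S from st to a loco-state projecting to γ_t, MRL(st, γ_t) + r·MRC(st, γ_t) ≤ length(p) + r·cost(p). -/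
open scoped ENNReal

lemma pairSum_map {V W : Type*} (g : W → W → ℝ) (f : V → W) :
    ∀ p : List V, pairSum g (p.map f) = pairSum (fun a b => g (f a) (f b)) p
  | [] => rfl
  | [_] => rfl
  | a :: b :: rest => by
      simp only [List.map_cons, pairSum]
      rw [← List.map_cons, pairSum_map g f (b :: rest)]

lemma pairSum_congr {V : Type*} {N : V → V → Prop} {g h : V → V → ℝ}
    (hgh : ∀ a b, N a b → g a b = h a b) :
    ∀ p : List V, p.Chain' N → pairSum g p = pairSum h p
  | [], _ => rfl
  | [_], _ => rfl
  | a :: b :: rest, hc => by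
      simp only [List.Chain', List.isChain_cons_cons] at hc
      simp only [pairSum, hgh a b hc.1, pairSum_congr hgh (b :: rest) hc.2]

lemma pairSum_le {V : Type*} {N : V → V → Prop} {g h : V → V → ℝ}
    (hgh : ∀ a b, N a b → g a b ≤ h a b) :
    ∀ p : List V, p.Chain' N → pairSum g p ≤ pairSum h p
  | [], _ => le_refl _
  | [_], _ => le_refl _
  | a :: b :: rest, hc => by
      simp only [List.Chain', List.isChain_cons_cons] at hc
      exact add_le_add (hgh a b hc.1) (pairSum_le hgh (b :: rest) hc.2)

/-- Admissibility of the TECO heuristic in the Informed Dual-World Search of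
DEWN: `MRL(st, γt) + r·MRC(st, γt)` never exceeds the Lagrangian cost
`length(p) + r·cost(p)` of any walk `p` in the loco-state space from `st` to
a loco-state projecting to `γt`. Here `MRL` is the infimum of total length
over virtual walks from `f st` to `γt` and `MRC` is the infimum of the sum of
the per-edge MIL lower bounds `α` over such virtual walks. -/
theorem stmt_13 {S Γ : Type*} [Fintype S] [Nonempty S]
    (Ev : Γ → Γ → Prop) (lv : Γ → Γ → ℝ) (hlv : ∀ a b : Γ, Ev a b → 0 < lv a b)
    (f : S → Γ) (N : S → S → Prop)
    (hproj : ∀ a b : S, N a b → Ev (f a) (f b))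
    (l : S → S → ℝ) (hlen : ∀ a b : S, N a b → l a b = lv (f a) (f b))
    (MIL : S → S → ℝ) (hMIL : ∀ a b : S, N a b → 0 ≤ MIL a b)
    (hfib : ∀ γ : Γ, ∃ st : S, f st = γ)
    (α : Γ → Γ → ℝ)
    (hα : ∀ γ γ' : Γ,
      IsLeast {z : ℝ | ∃ st₁ st₂ : S, f st₁ = γ ∧ f st₂ = γ' ∧ MIL st₁ st₂ = z}
        (α γ γ')) :
    ∀ (γt : Γ) (r : ℝ), 0 ≤ r →
      ∀ (st t : S) (p : List S), f t = γt → IsWalk N st t p →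
        sInf {x : ℝ≥0∞ | ∃ q : List Γ, IsWalk Ev (f st) γt q ∧
            x = ENNReal.ofReal (pairSum lv q)} +
          ENNReal.ofReal r *
            sInf {x : ℝ≥0∞ | ∃ q : List Γ, IsWalk Ev (f st) γt q ∧
              x = ENNReal.ofReal (pairSum α q)} ≤
        ENNReal.ofReal (pairSum l p) +
          ENNReal.ofReal r * ENNReal.ofReal (pairSum MIL p) := by
  intro γt r hr st t p ht hp
  obtain ⟨hne, hhead, hlast, hchain⟩ := hp
  have hqwalk : IsWalk Ev (f st) γt (p.map f) := by
    refine ⟨by simpa using hne, ?_, ?_, ?_⟩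
    · rw [List.head?_map, hhead]; rfl
    · rw [List.getLast?_map, hlast]; simp [ht]
    · exact List.isChain_map_of_isChain f (fun a b h => hproj a b h) hchain
  have h1 : ENNReal.ofReal (pairSum l p) ∈
      {x : ℝ≥0∞ | ∃ q : List Γ, IsWalk Ev (f st) γt q ∧
        x = ENNReal.ofReal (pairSum lv q)} := by
    refine ⟨p.map f, hqwalk, ?_⟩
    rw [pairSum_map, pairSum_congr hlen p hchain]
  have h2 : sInf {x : ℝ≥0∞ | ∃ q : List Γ, IsWalk Ev (f st) γt q ∧
      x = ENNReal.ofReal (pairSum α q)} ≤ ENNReal.ofReal (pairSum MIL p) := by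
    refine le_trans (sInf_le ⟨p.map f, hqwalk, rfl⟩) ?_
    apply ENNReal.ofReal_le_ofReal
    rw [pairSum_map]
    refine pairSum_le (fun a b hab => ?_) p hchain
    exact (hα (f a) (f b)).2 ⟨a, b, rfl, rfl, rfl⟩
  exact add_le_add (sInf_le h1) (mul_le_mul_right h2 _)
end
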